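/- Let G = PSL₂(q), where q ≡ 1 mod 4 and q = p^k for some k ≥ 1 and odd prime p, and let i ∈ G be an involution. Then the number of elements g ∈ G such that i·i^g has order p is at least |G|/q; that is, q times the cardinality of {g ∈ G : the order of i·i^g equals p} is at least the cardinality of G. -/

import Mathlib

/-!
An involution of `PSL₂(q)` lifts to `w ∈ SL₂(q)` of trace `0`, so `w² = -1`. As `q ≡ 1 mod 4`,
`-1 = a²` in `𝔽_q` and `w` is conjugate in `SL₂(q)` to `d = diag(a, a⁻¹) = diag(a, -a)`;
conjugating `i` only conjugates the set of good `g`, so we may take `i = d`.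
Then `i · i^g = [d, g⁻¹]`, and `[d, t] = t⁻²` for every transvection `t`, which has order `p`
in `PSL₂`. The good set is stable under left multiplication by the diagonal torus, which commutes
with `d`, so it contains the images of the `2 (q - 1)²` matrices `diag(x, x⁻¹) · t` with `t` a
nontrivial upper or lower transvection. Fibres of `SL₂ → PSL₂` have the size of the center, and
`|SL₂(q)| ≤ q (q² - 1) ≤ 2 q (q - 1)²`.
-/

/-- `PSL₂(F)`: the quotient of `SL₂(F)` by its center. -/
abbrev PSL2 (F : Type*) [Field F] : Type _ :=
  Matrix.SpecialLinearGroup (Fin 2) F ⧸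
    Subgroup.center (Matrix.SpecialLinearGroup (Fin 2) F)

open Matrix Matrix.SpecialLinearGroup
open scoped commutatorElement MatrixGroups

section Group

variable {G H : Type*} [Group G] [Group H]

def mulConjOrderSet (i : G) (n : ℕ) : Set G := {g | orderOf (i * (g⁻¹ * i * g)) = n}

lemma mul_mem_mulConjOrderSet {i c g : G} {n : ℕ} (hc : Commute c i)
    (hg : g ∈ mulConjOrderSet i n) : c * g ∈ mulConjOrderSet i n := by
  have hconj : c⁻¹ * i * c = i := by rw [mul_assoc, ← hc.eq, inv_mul_cancel_left]
  have : (c * g)⁻¹ * i * (c * g) = g⁻¹ * i * g :=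
    calc (c * g)⁻¹ * i * (c * g) = g⁻¹ * (c⁻¹ * i * c) * g := by group
      _ = g⁻¹ * i * g := by rw [hconj]
  simpa only [mulConjOrderSet, Set.mem_ofPred_eq, this] using hg

lemma image_mulConjOrderSet (e : G ≃* H) (i : G) (n : ℕ) :
    e '' mulConjOrderSet i n = mulConjOrderSet (e i) n := by
  ext x
  rw [← MulEquiv.coe_toEquiv, Set.mem_image_equiv]
  simp [mulConjOrderSet, ← MulEquiv.orderOf_eq e]

lemma ncard_mulConjOrderSet_conj (i h : G) (n : ℕ) :
    (mulConjOrderSet (h * i * h⁻¹) n).ncard = (mulConjOrderSet i n).ncard := by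
  rw [← MulAut.conj_apply, ← image_mulConjOrderSet,
    Set.ncard_image_of_injective _ (MulAut.conj h).injective]

lemma mem_mulConjOrderSet_iff_of_mul_self {i : G} (hi : i * i = 1) (g : G) (n : ℕ) :
    g ∈ mulConjOrderSet i n ↔ orderOf ⁅i, g⁻¹⁆ = n := by
  rw [mulConjOrderSet, Set.mem_ofPred_eq, commutatorElement_def, inv_inv,
    inv_eq_of_mul_eq_one_right hi]
  group

lemma card_quotient_le_mul_ncard_image_mk [Finite G] (N : Subgroup G) {A : Set G} {m : ℕ}
    (hA : Nat.card G ≤ m * A.ncard) :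
    Nat.card (G ⧸ N) ≤ m * (QuotientGroup.mk '' A : Set (G ⧸ N)).ncard := by
  have hfib : A.ncard ≤ Nat.card N * (QuotientGroup.mk '' A : Set (G ⧸ N)).ncard :=
    calc A.ncard ≤ (QuotientGroup.mk ⁻¹' (QuotientGroup.mk '' A : Set (G ⧸ N))).ncard :=
          Set.ncard_le_ncard (Set.subset_preimage_image _ _) (Set.toFinite _)
      _ = _ := by
          rw [← Nat.card_coe_set_eq,
            Nat.card_congr (QuotientGroup.preimageMkEquivSubgroupProdSet N _), Nat.card_prod,
            Nat.card_coe_set_eq]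
  refine Nat.le_of_mul_le_mul_right ?_ (Nat.card_pos (α := N))
  calc Nat.card (G ⧸ N) * Nat.card N = Nat.card G :=
        (Subgroup.card_eq_card_quotient_mul_card_subgroup N).symm
    _ ≤ m * A.ncard := hA
    _ ≤ m * (Nat.card N * _) := Nat.mul_le_mul_left m hfib
    _ = _ := by ring

end Group

namespace Matrix.SpecialLinearGroup

section Transvection

variable {ι R : Type*} [Fintype ι] [DecidableEq ι] [CommRing R]

lemma transvection_pow {i j : ι} (hij : i ≠ j) (b : R) (n : ℕ) :
    transvection hij b ^ n = transvection hij (n * b) := by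
  induction n with
  | zero => simp
  | succ n ih => rw [pow_succ, ih, ← transvection_add]; push_cast; ring_nf

lemma orderOf_mk_transvection (p : ℕ) [Fact p.Prime] [CharP R p] {i j : ι} (hij : i ≠ j)
    {b : R} (hb : b ≠ 0) :
    orderOf (transvection hij b :
      SpecialLinearGroup ι R ⧸ Subgroup.center (SpecialLinearGroup ι R)) = p := by
  apply orderOf_eq_prime
  · rw [← QuotientGroup.mk_pow, transvection_pow, CharP.cast_eq_zero, zero_mul,
      transvection_coeff_zero, QuotientGroup.mk_one]
  · rw [Ne, QuotientGroup.eq_one_iff, transvection_mem_center_iff]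
    exact hb

end Transvection

variable {F : Type*} [Field F]

lemma card_SL2_le [Fintype F] : Nat.card SL(2, F) ≤ (Fintype.card F ^ 2 - 1) * Fintype.card F := by
  classical
  have hdet (g : SL(2, F)) : g 0 0 * g 1 1 - g 0 1 * g 1 0 = 1 := by
    rw [← Matrix.det_fin_two]; exact g.2
  -- The determinant condition recovers the missing entry of the second column.
  let f : SL(2, F) → {v : F × F // v ≠ 0} × F := fun g =>
    (⟨(g 0 0, g 1 0), fun h => by
      obtain ⟨h0, h1⟩ := Prod.mk_eq_zero.mp h
      simpa [h0, h1] using hdet g⟩,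
      if g 0 0 = 0 then g 1 1 else g 0 1)
  have hf : Function.Injective f := by
    intro g g' hgg'
    simp only [f, Prod.ext_iff, Subtype.ext_iff] at hgg'
    obtain ⟨⟨h00, h10⟩, hrest⟩ := hgg'
    have hg := hdet g
    have hg' := hdet g'
    rw [← h00, ← h10] at hg'
    rw [← h00] at hrest
    by_cases ha : g 0 0 = 0
    · rw [if_pos ha, if_pos ha] at hrest
      have hc : g 1 0 ≠ 0 := by rintro hc; simp [ha, hc] at hg
      have h01 : g 0 1 = g' 0 1 :=
        mul_right_cancel₀ hc (by linear_combination hg' - hg + g 0 0 * hrest)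
      ext i j; fin_cases i <;> fin_cases j <;> assumption
    · rw [if_neg ha, if_neg ha] at hrest
      have h11 : g 1 1 = g' 1 1 :=
        mul_left_cancel₀ ha (by linear_combination hg - hg' + g 1 0 * hrest)
      ext i j; fin_cases i <;> fin_cases j <;> assumption
  calc Nat.card SL(2, F) ≤ Nat.card ({v : F × F // v ≠ 0} × F) :=
        Nat.card_le_card_of_injective f hf
    _ = _ := by simp [Nat.card_eq_fintype_card, Fintype.card_subtype_compl, sq]

lemma trace_eq_zero_of_orderOf_mk_eq_two {w : SL(2, F)}
    (hw : orderOf (w : SL(2, F) ⧸ Subgroup.center SL(2, F)) = 2) :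
    trace (w : Matrix (Fin 2) (Fin 2) F) = 0 := by
  rw [trace_fin_two]
  have hsq : w ^ 2 ∈ Subgroup.center SL(2, F) := by
    rw [← QuotientGroup.eq_one_iff, QuotientGroup.mk_pow, ← orderOf_dvd_iff_pow_eq_one, hw]
  obtain ⟨r, -, hr⟩ := mem_center_iff.mp hsq
  have hentry (k l : Fin 2) : (w ^ 2 : SL(2, F)) k l = scalar (Fin 2) r k l := by rw [hr]
  have h01 := hentry 0 1
  have h10 := hentry 1 0
  have h00 := hentry 0 0
  have h11 := hentry 1 1
  simp only [sq, Fin.isValue, coe_mul, mul_apply, Fin.sum_univ_two, scalar_apply, ne_eq,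
    zero_ne_one, not_false_eq_true, diagonal_apply_ne, one_ne_zero, diagonal_apply_eq]
    at h01 h10 h00 h11
  have hdet : w 0 0 * w 1 1 - w 0 1 * w 1 0 = 1 := by rw [← Matrix.det_fin_two]; exact w.2
  -- Otherwise `w ^ 2` being scalar forces `w` itself to be scalar, i.e. central.
  by_contra htr
  have hb : w 0 1 = 0 :=
    (mul_eq_zero.mp (by linear_combination h01 : w 0 1 * (w 0 0 + w 1 1) = 0)).resolve_right htr
  have hc : w 1 0 = 0 :=
    (mul_eq_zero.mp (by linear_combination h10 : w 1 0 * (w 0 0 + w 1 1) = 0)).resolve_right htr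
  have hd : w 1 1 = w 0 0 := by
    have := (mul_eq_zero.mp (by linear_combination h11 - h00 :
      (w 1 1 - w 0 0) * (w 0 0 + w 1 1) = 0)).resolve_right htr
    linear_combination this
  have hcenter : w ∈ Subgroup.center SL(2, F) := mem_center_iff.mpr ⟨w 0 0, by
    rw [Fintype.card_fin]; rw [hb, hd] at hdet; linear_combination hdet, by
    ext k l; fin_cases k <;> fin_cases l <;> simp [hb, hc, hd]⟩
  rw [(QuotientGroup.eq_one_iff w).mpr hcenter, orderOf_one] at hw
  exact absurd hw (by norm_num)

lemma inv_eq_neg_of_sq_eq_neg_one {a : F} (ha : a ^ 2 = -1) : a⁻¹ = -a := by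
  have : a ≠ 0 := by rintro rfl; simp at ha
  field_simp; linear_combination ha

lemma exists_eq_conj_diag2_of_mul_eq {w : SL(2, F)} {a : F} (ha : a ≠ 0)
    {M : Matrix (Fin 2) (Fin 2) F} (hM : M.det ≠ 0) (hwM : w * M = M * !![a, 0; 0, a⁻¹]) :
    ∃ H : SL(2, F), w = H * diag2 a ha * H⁻¹ := by
  -- Rescaling the first column of `M` normalizes the determinant without breaking `hwM`.
  let D : Matrix (Fin 2) (Fin 2) F := !![M.det⁻¹, 0; 0, 1]
  have hD : !![a, 0; 0, a⁻¹] * D = D * !![a, 0; 0, a⁻¹] := by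
    ext k l; fin_cases k <;> fin_cases l <;> simp [D, mul_comm]
  refine ⟨(⟨M * D, by simp [D, Matrix.det_fin_two_of, hM]⟩ : SL(2, F)),
    eq_mul_inv_of_mul_eq (Subtype.ext ?_)⟩
  change w * (M * D) = M * D * (diag2 a ha : Matrix (Fin 2) (Fin 2) F)
  rw [diag2_coe', ← mul_assoc, hwM, mul_assoc, hD, mul_assoc]

lemma exists_eq_conj_diag2_of_trace_eq_zero {w : SL(2, F)}
    (hw : trace (w : Matrix (Fin 2) (Fin 2) F) = 0) (h2 : (2 : F) ≠ 0) (hsq : IsSquare (-1 : F)) :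
    ∃ a : Fˣ, (a : F) ^ 2 = -1 ∧ ∃ H : SL(2, F), w = H * diag2 (a : F) a.ne_zero * H⁻¹ := by
  rw [trace_fin_two] at hw
  induction w using fin_two_induction with | h α β γ δ hdet => ?_
  obtain rfl : δ = -α := (neg_eq_of_add_eq_zero_right hw).symm
  -- The columns of `M` are eigenvectors of `w`: `(w + α) e₁, e₂` if `β = 0` (and then `a = α`),
  -- `(w + a) e₂, (w - a) e₂` otherwise.
  by_cases hb : β = 0
  · subst hb
    have ha : α ^ 2 = -1 := by linear_combination -hdet
    have ha0 : α ≠ 0 := by rintro rfl; simp at ha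
    refine ⟨Units.mk0 α ha0, ha, exists_eq_conj_diag2_of_mul_eq ha0 (M := !![2 * α, 0; γ, 1])
      (by simp [det_fin_two_of, h2, ha0]) ?_⟩
    rw [inv_eq_neg_of_sq_eq_neg_one ha]
    ext k l; fin_cases k <;> fin_cases l <;> simp <;> ring
  · obtain ⟨a, ha⟩ := hsq
    have ha2 : a ^ 2 = -1 := by rw [ha, sq]
    have ha0 : a ≠ 0 := by rintro rfl; simp at ha2
    refine ⟨Units.mk0 a ha0, ha2, exists_eq_conj_diag2_of_mul_eq ha0
      (M := !![β, β; a - α, -a - α]) ?_ ?_⟩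
    · rw [det_fin_two_of]
      intro h
      exact mul_ne_zero (mul_ne_zero h2 ha0) hb (by linear_combination -h)
    · rw [inv_eq_neg_of_sq_eq_neg_one ha2]
      ext k l; fin_cases k <;> fin_cases l <;> simp
      · ring
      · ring
      · linear_combination -hdet - ha2
      · linear_combination -hdet - ha2

lemma commute_diag2 {x y : F} (hx : x ≠ 0) (hy : y ≠ 0) : Commute (diag2 x hx) (diag2 y hy) := by
  ext k l; fin_cases k <;> fin_cases l <;> simp [diag2_coe, mul_comm]

lemma commutator_diag2_transvection_of_sq_eq_neg_one {a : F} (ha0 : a ≠ 0) (ha : a ^ 2 = -1)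
    {i j : Fin 2} (hij : i ≠ j) (b : F) :
    ⁅diag2 a ha0, transvection hij b⁆ = transvection hij (-2 * b) := by
  have hinv := inv_eq_neg_of_sq_eq_neg_one ha
  rw [commutatorElement_def, diag2_inv a ha0, transvection_inv]
  obtain ⟨rfl, rfl⟩ | ⟨rfl, rfl⟩ : (i = 0 ∧ j = 1) ∨ (i = 1 ∧ j = 0) := by
    fin_cases i <;> fin_cases j <;> simp_all
  all_goals
    ext k l
    fin_cases k <;> fin_cases l <;>
      simp [diag2_coe, transvection_coe, mul_apply, Fin.sum_univ_two, one_apply, single_apply,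
        hinv] <;> grind

lemma mk_diag2_mul_self {a : F} (ha0 : a ≠ 0) (ha : a ^ 2 = -1) :
    (diag2 a ha0 : PSL2 F) * (diag2 a ha0 : PSL2 F) = 1 := by
  rw [← QuotientGroup.mk_mul, QuotientGroup.eq_one_iff, mem_center_iff]
  refine ⟨-1, by norm_num, ?_⟩
  have hsq : a * a = -1 := by rw [← sq, ha]
  ext k l; fin_cases k <;> fin_cases l <;>
    simp [diag2_coe, inv_eq_neg_of_sq_eq_neg_one ha, hsq]

lemma mk_transvection_mem_mulConjOrderSet (p : ℕ) [Fact p.Prime] [CharP F p] (h2 : (2 : F) ≠ 0)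
    {a : F} (ha0 : a ≠ 0) (ha : a ^ 2 = -1) {i j : Fin 2} (hij : i ≠ j) {c : F} (hc : c ≠ 0) :
    (transvection hij c : PSL2 F) ∈ mulConjOrderSet (diag2 a ha0 : PSL2 F) p := by
  rw [mem_mulConjOrderSet_iff_of_mul_self (mk_diag2_mul_self ha0 ha), ← QuotientGroup.mk_inv,
    transvection_inv, ← QuotientGroup.mk'_apply, ← QuotientGroup.mk'_apply,
    ← map_commutatorElement, commutator_diag2_transvection_of_sq_eq_neg_one ha0 ha,
    QuotientGroup.mk'_apply]
  exact orderOf_mk_transvection p hij (by simpa [h2] using hc)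

noncomputable def diag2MulTransvection : (Fˣ × Fˣ) ⊕ (Fˣ × Fˣ) → SL(2, F)
  | .inl (x, c) => diag2 (x : F) x.ne_zero * transvection zero_ne_one (c : F)
  | .inr (x, c) => diag2 (x : F) x.ne_zero * transvection one_ne_zero (c : F)

lemma diag2MulTransvection_injective : Function.Injective (diag2MulTransvection (F := F)) := by
  intro u v huv
  have entry (k l : Fin 2) := congrArg (fun g : SL(2, F) => g k l) huv
  have h00 := entry 0 0
  have h01 := entry 0 1
  have h10 := entry 1 0
  rcases u with ⟨x, c⟩ | ⟨x, c⟩ <;> rcases v with ⟨y, e⟩ | ⟨y, e⟩ <;>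
    simp [diag2MulTransvection, diag2_coe, transvection_coe, mul_apply, Fin.sum_univ_two,
      one_apply, single_apply] at h00 h01 h10 ⊢
  · obtain rfl := Units.ext h00
    exact ⟨rfl, Units.ext (mul_left_cancel₀ x.ne_zero h01)⟩
  · obtain rfl := Units.ext h00
    exact ⟨rfl, Units.ext (mul_left_cancel₀ (inv_ne_zero x.ne_zero) h10)⟩

lemma card_PSL2_le_mul_ncard_mulConjOrderSet [Fintype F] (p : ℕ) [Fact p.Prime] [CharP F p]
    (hF : ringChar F ≠ 2) {a : F} (ha0 : a ≠ 0) (ha : a ^ 2 = -1) :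
    Nat.card (PSL2 F) ≤
      Fintype.card F * (mulConjOrderSet (diag2 a ha0 : PSL2 F) p).ncard := by
  classical
  set q := Fintype.card F
  have h2 : (2 : F) ≠ 0 := Ring.two_ne_zero hF
  have hq : 3 ≤ q := by
    have := FiniteField.odd_card_of_char_ne_two hF
    have := Fintype.one_lt_card (α := F)
    omega
  refine (card_quotient_le_mul_ncard_image_mk _ (A := Set.range diag2MulTransvection) ?_).trans
    (Nat.mul_le_mul_left _ (Set.ncard_le_ncard ?_ (Set.toFinite _)))
  · rw [Set.ncard_range_of_injective diag2MulTransvection_injective]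
    calc Nat.card SL(2, F) ≤ (q ^ 2 - 1) * q := card_SL2_le
      _ ≤ q * (2 * (q - 1) ^ 2) := by
          rw [mul_comm]
          refine Nat.mul_le_mul_left q ?_
          zify [Nat.one_le_pow 2 q (by omega), (by omega : 1 ≤ q)]
          nlinarith
      _ = _ := by
          rw [Nat.card_sum, Nat.card_prod, Nat.card_eq_fintype_card, Fintype.card_units]; ring
  · rintro _ ⟨_, ⟨⟨x, c⟩ | ⟨x, c⟩, rfl⟩, rfl⟩ <;>
    · rw [diag2MulTransvection, QuotientGroup.mk_mul]
      exact mul_mem_mulConjOrderSet ((commute_diag2 _ _).map (QuotientGroup.mk' _))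
        (mk_transvection_mem_mulConjOrderSet p h2 ha0 ha _ c.ne_zero)

end Matrix.SpecialLinearGroup

theorem proportion_unipotent_product_general (p k q : ℕ) (hp : p.Prime)
    (hq : q = p ^ k) (hq4 : q % 4 = 1)
    (F : Type*) [Field F] [Fintype F] (hF : Fintype.card F = q)
    (i : PSL2 F) (hi : orderOf i = 2) :
    Nat.card (PSL2 F) ≤
      q * Set.ncard {g : PSL2 F | orderOf (i * (g⁻¹ * i * g)) = p} := by
  have := Fact.mk hp
  have : CharP F p := charP_of_card_eq_prime_pow (hF.trans hq)
  have hchar : ringChar F ≠ 2 := fun h => by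
    have := FiniteField.even_card_of_char_two h
    omega
  obtain ⟨w, rfl⟩ := QuotientGroup.mk_surjective i
  obtain ⟨a, ha, H, rfl⟩ := exists_eq_conj_diag2_of_trace_eq_zero
    (trace_eq_zero_of_orderOf_mk_eq_two hi) (Ring.two_ne_zero hchar)
    (FiniteField.isSquare_neg_one_iff.mpr (by omega))
  change _ ≤ q * (mulConjOrderSet _ p).ncard
  rw [QuotientGroup.mk_mul, QuotientGroup.mk_mul, QuotientGroup.mk_inv,
    ncard_mulConjOrderSet_conj, ← hF]
  exact card_PSL2_le_mul_ncard_mulConjOrderSet p hchar a.ne_zero ha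

/-- Let `G = PSL₂(q)`, `q ≡ 1 mod 4`, `q = p^k`, `p` an odd prime,
`k ≥ 1`, and let `i ∈ G` be an involution.  Then the number of `g ∈ G` such that
`i·i^g` has order `p` is at least `|G|/q`, i.e. `q` times the number of such `g` is at
least `|G|`. -/
theorem proportion_unipotent_product (p k q : ℕ) (hp : p.Prime) (hpodd : Odd p)
    (hk : 1 ≤ k) (hq : q = p ^ k) (hq4 : q % 4 = 1)
    (F : Type*) [Field F] [Fintype F] (hF : Fintype.card F = q)
    (i : PSL2 F) (hi : orderOf i = 2) :
    Nat.card (PSL2 F) ≤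
      q * Set.ncard {g : PSL2 F | orderOf (i * (g⁻¹ * i * g)) = p} :=
  proportion_unipotent_product_general p k q hp hq hq4 F hF i hi
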